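/- arXiv:0910.2223 — 9 statements merged into one kernel-verified Lean document; each statement's English description precedes it below -/
import Mathlib

section
/- Let m be a positive even integer and define A(m) = m * ∏_{p prime, (p-1) ∣ m} p/(p-1) (a rational number, the product being over the finitely many primes p such that p-1 divides m). If n is a positive integer with φ(n) = m, then m < n and (n : ℚ) ≤ A(m). -/
/-- `A m = m * ∏_{p prime, (p-1) ∣ m} p / (p-1)`, as a rational number.
Any prime `p` with `p - 1 ∣ m` (for `m > 0`) satisfies `p ≤ m + 1`, so the
product over `p ∈ Finset.range (m + 2)` captures exactly these primes. -/
noncomputable def A (m : ℕ) : ℚ :=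
  (m : ℚ) * ∏ p ∈ (Finset.range (m + 2)).filter (fun p => p.Prime ∧ (p - 1) ∣ m),
    (p : ℚ) / ((p : ℚ) - 1)

theorem gupta_bound (m : ℕ) (hm : 0 < m) (hme : Even m) (n : ℕ) (hn : 0 < n)
    (h : Nat.totient n = m) : m < n ∧ (n : ℚ) ≤ A m := by
  have hn1 : 1 < n := by
    by_contra hc
    have hn' : n = 1 := by omega
    subst hn'
    simp [Nat.totient_one] at h
    rcases hme with ⟨k, hk⟩
    omega
  have hmn : m < n := h ▸ Nat.totient_lt n hn1
  refine ⟨hmn, ?_⟩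
  -- key identity : (n:ℚ) = m * ∏_{p ∈ n.primeFactors} p/(p-1)
  set T := n.primeFactors with hT
  have hfac1 : ∀ p ∈ T, (1 : ℚ) ≤ (p : ℚ) / ((p : ℚ) - 1) := by
    intro p hp
    have hp2 : 2 ≤ p := (Nat.prime_of_mem_primeFactors hp).two_le
    have : (1:ℚ) ≤ (p:ℚ) - 1 := by
      have : (2:ℚ) ≤ (p:ℚ) := by exact_mod_cast hp2
      linarith
    rw [le_div_iff₀ (by linarith)]
    linarith
  have hkey : (n : ℚ) = (m : ℚ) * ∏ p ∈ T, (p : ℚ) / ((p : ℚ) - 1) := by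
    have hq := Nat.totient_eq_mul_prod_factors n
    rw [h] at hq
    rw [hq, mul_assoc, ← Finset.prod_mul_distrib]
    have : ∏ p ∈ T, (1 - (p:ℚ)⁻¹) * ((p : ℚ) / ((p : ℚ) - 1)) = 1 := by
      apply Finset.prod_eq_one
      intro p hp
      have hp2 : 2 ≤ p := (Nat.prime_of_mem_primeFactors hp).two_le
      have hp0 : (p:ℚ) ≠ 0 := by positivity
      have hp1 : (p:ℚ) - 1 ≠ 0 := by
        have : (2:ℚ) ≤ (p:ℚ) := by exact_mod_cast hp2
        intro hc; rw [sub_eq_zero] at hc; linarith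
      field_simp
    rw [this, mul_one]
  set S := (Finset.range (m + 2)).filter (fun p => p.Prime ∧ (p - 1) ∣ m) with hS
  have hsub : T ⊆ S := by
    intro p hp
    have hpp := Nat.prime_of_mem_primeFactors hp
    have hdvd : p - 1 ∣ m := by
      have := Nat.totient_dvd_of_dvd (Nat.dvd_of_mem_primeFactors hp)
      rwa [h, Nat.totient_prime hpp] at this
    have hle : p - 1 ≤ m := Nat.le_of_dvd hm hdvd
    have : p < m + 2 := by omega
    simp [hS, Finset.mem_filter, Finset.mem_range, this, hpp, hdvd]
  have hfacS : ∀ p ∈ S, (1 : ℚ) ≤ (p : ℚ) / ((p : ℚ) - 1) := by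
    intro p hp
    have hp2 : 2 ≤ p := ((Finset.mem_filter.mp hp).2.1).two_le
    have : (1:ℚ) ≤ (p:ℚ) - 1 := by
      have : (2:ℚ) ≤ (p:ℚ) := by exact_mod_cast hp2
      linarith
    rw [le_div_iff₀ (by linarith)]
    linarith
  have hTnn : (0:ℚ) ≤ ∏ p ∈ T, (p : ℚ) / ((p : ℚ) - 1) :=
    Finset.prod_nonneg fun p hp => le_trans zero_le_one (hfac1 p hp)
  have h1 : (1:ℚ) ≤ ∏ p ∈ S \ T, (p : ℚ) / ((p : ℚ) - 1) := by
    calc (1:ℚ) = ∏ p ∈ S \ T, (1:ℚ) := by simp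
    _ ≤ _ := Finset.prod_le_prod (by intros; norm_num)
        (fun i hi => hfacS i (Finset.mem_sdiff.mp hi).1)
  have hprod : ∏ p ∈ T, (p : ℚ) / ((p : ℚ) - 1) ≤ ∏ p ∈ S, (p : ℚ) / ((p : ℚ) - 1) := by
    calc ∏ p ∈ T, (p : ℚ) / ((p : ℚ) - 1)
        = 1 * ∏ p ∈ T, (p : ℚ) / ((p : ℚ) - 1) := (one_mul _).symm
    _ ≤ (∏ p ∈ S \ T, (p : ℚ) / ((p : ℚ) - 1)) * ∏ p ∈ T, (p : ℚ) / ((p : ℚ) - 1) :=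
        mul_le_mul_of_nonneg_right h1 hTnn
    _ = _ := Finset.prod_sdiff hsub
  rw [hkey]
  unfold A
  exact mul_le_mul_of_nonneg_left hprod (by positivity)
end

section
/- Let m be a positive even integer and define A(m) = m * ∏_{p prime, (p-1) ∣ m} p/(p-1). If n is an odd positive integer with φ(n) = m, then (n : ℚ) ≤ A(m)/2. -/
theorem odd_bound (m : ℕ) (hm : 0 < m) (hme : Even m) (n : ℕ) (hn : 0 < n)
    (hodd : Odd n) (h : Nat.totient n = m) : (n : ℚ) ≤ A m / 2 := by
  classical
  set f : ℕ → ℚ := fun p => (p : ℚ) / ((p : ℚ) - 1) with hf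
  set T := (Finset.range (m + 2)).filter (fun p => p.Prime ∧ (p - 1) ∣ m) with hT
  have hf1 : ∀ p : ℕ, p.Prime → 1 ≤ f p := by
    intro p hp
    have h2 : (2 : ℚ) ≤ (p : ℚ) := by exact_mod_cast hp.two_le
    have : (0 : ℚ) < (p : ℚ) - 1 := by linarith
    rw [hf]
    rw [le_div_iff₀ this]
    linarith
  -- primes of n
  have hsub : n.primeFactors ⊆ T.erase 2 := by
    intro p hp
    have hpp := Nat.prime_of_mem_primeFactors hp
    have hpd := Nat.dvd_of_mem_primeFactors hp
    have hdvd : p - 1 ∣ m := by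
      have := Nat.totient_dvd_of_dvd hpd
      rwa [Nat.totient_prime hpp, h] at this
    have hne2 : p ≠ 2 := by
      rintro rfl
      exact (Nat.not_even_iff_odd.mpr hodd) ((even_iff_two_dvd).mpr hpd)
    refine Finset.mem_erase.mpr ⟨hne2, Finset.mem_filter.mpr ⟨?_, hpp, hdvd⟩⟩
    have hle : p - 1 ≤ m := Nat.le_of_dvd hm hdvd
    have : p ≤ m + 1 := by omega
    exact Finset.mem_range.mpr (by omega)
  have h2T : 2 ∈ T := by
    refine Finset.mem_filter.mpr ⟨Finset.mem_range.mpr (by omega), Nat.prime_two, by simp⟩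
  -- key identity
  have hprodpos : (0 : ℚ) < ∏ p ∈ n.primeFactors, ((p : ℚ) - 1) := by
    apply Finset.prod_pos
    intro p hp
    have h2 : (2 : ℚ) ≤ (p : ℚ) := by
      exact_mod_cast (Nat.prime_of_mem_primeFactors hp).two_le
    linarith
  have key : (n : ℚ) = (m : ℚ) * ∏ p ∈ n.primeFactors, f p := by
    have := Nat.totient_mul_prod_primeFactors n
    have hc : ((Nat.totient n : ℚ)) * ∏ p ∈ n.primeFactors, (p : ℚ)
        = (n : ℚ) * ∏ p ∈ n.primeFactors, ((p : ℚ) - 1) := by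
      have := congrArg (Nat.cast : ℕ → ℚ) this
      push_cast at this
      rw [this]
      congr 1
      apply Finset.prod_congr rfl
      intro p hp
      have h2 : 2 ≤ p := (Nat.prime_of_mem_primeFactors hp).two_le
      push_cast [Nat.cast_sub (by omega : 1 ≤ p)]
      ring
    rw [h] at hc
    rw [hf, Finset.prod_div_distrib, mul_div_assoc', eq_comm,
      div_eq_iff (ne_of_gt hprodpos)]
    linarith [hc]
  have hmono : ∏ p ∈ n.primeFactors, f p ≤ ∏ p ∈ T.erase 2, f p := by
    have hSpos : (0:ℚ) ≤ ∏ p ∈ n.primeFactors, f p := by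
      apply Finset.prod_nonneg
      intro p hp
      exact le_trans zero_le_one (hf1 p (Nat.prime_of_mem_primeFactors hp))
    have hdiff : (1:ℚ) ≤ ∏ p ∈ (T.erase 2) \ n.primeFactors, f p := by
      have h1 : ∀ p ∈ (T.erase 2) \ n.primeFactors, (1:ℚ) ≤ f p := by
        intro p hp
        have := Finset.mem_sdiff.mp hp
        exact hf1 p (Finset.mem_filter.mp (Finset.mem_of_mem_erase this.1)).2.1
      calc (1:ℚ) = ∏ _p ∈ (T.erase 2) \ n.primeFactors, (1:ℚ) := by simp
        _ ≤ _ := Finset.prod_le_prod (fun i _ => zero_le_one) h1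
    calc ∏ p ∈ n.primeFactors, f p
        ≤ (∏ p ∈ n.primeFactors, f p) * ∏ p ∈ (T.erase 2) \ n.primeFactors, f p :=
          le_mul_of_one_le_right hSpos hdiff
      _ = ∏ p ∈ T.erase 2, f p := by
          rw [mul_comm]; exact Finset.prod_sdiff hsub
  have hsplit : ∏ p ∈ T, f p = 2 * ∏ p ∈ T.erase 2, f p := by
    rw [← Finset.mul_prod_erase T f h2T]
    norm_num [hf]
  have hmnn : (0 : ℚ) ≤ (m : ℚ) := by positivity
  calc (n : ℚ) = (m : ℚ) * ∏ p ∈ n.primeFactors, f p := key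
    _ ≤ (m : ℚ) * ∏ p ∈ T.erase 2, f p := by
        exact mul_le_mul_of_nonneg_left hmono hmnn
    _ = A m / 2 := by
        rw [A, ← hT, hsplit]; ring
end

section
/- If p is a prime number, then there exists a positive integer n with φ(n) = 2p if and only if 2p+1 is prime. -/
open Nat

/-!
If `φ n = 2p` with `p` prime, then `p ∣ φ n = ∏_{q^k ∥ n} q^(k-1) (q-1)`, so either `p² ∣ n`
or `p ∣ q - 1` for a prime `q ∣ n`. In the first case `p (p-1) = φ (p²) ∣ 2p` forces `p ≤ 3`.
In the second, `p ∣ q - 1 ∣ φ n = 2p` gives `q = p + 1` (so `p = 2`) or `q = 2p + 1`.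
The exceptional primes `p = 2, 3` satisfy the claim since `5` and `7` are prime.
-/

theorem Nat.Prime.sq_dvd_or_exists_prime_dvd_sub_one_of_dvd_totient {p n : ℕ} (hp : p.Prime)
    (h : p ∣ φ n) : p ^ 2 ∣ n ∨ ∃ q, q.Prime ∧ q ∣ n ∧ p ∣ q - 1 := by
  rcases eq_or_ne n 0 with rfl | hn
  · simp
  rw [totient_eq_prod_factorization hn] at h
  obtain ⟨q, hq, hpq⟩ := (Prime.dvd_finsuppProd_iff hp.prime).1 h
  rw [support_factorization] at hq
  rcases hp.dvd_mul.1 hpq with hpow | hsub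
  · have hpq : p = q := (prime_dvd_prime_iff_eq hp (prime_of_mem_primeFactors hq)).1
      (hp.dvd_of_dvd_pow hpow)
    subst hpq
    have hk : 2 ≤ n.factorization p := by
      by_contra! hk
      have : n.factorization p - 1 = 0 := by omega
      rw [this, pow_zero] at hpow
      exact hp.one_lt.ne' (Nat.dvd_one.1 hpow)
    exact .inl ((Nat.pow_dvd_pow p hk).trans (ordProj_dvd n p))
  · exact .inr ⟨q, prime_of_mem_primeFactors hq, dvd_of_mem_primeFactors hq, hsub⟩

theorem Nat.eq_or_eq_two_mul_of_dvd_of_dvd_two_mul {p d : ℕ} (hp : 0 < p) (hpd : p ∣ d)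
    (hd : d ∣ 2 * p) : d = p ∨ d = 2 * p := by
  obtain ⟨t, rfl⟩ := hpd
  have ht : t ∣ 2 := Nat.dvd_of_mul_dvd_mul_left hp (by rwa [mul_comm 2] at hd)
  rcases (Nat.dvd_prime prime_two).1 ht with rfl | rfl
  · exact .inl (mul_one p)
  · exact .inr (mul_comm p 2)

theorem Nat.Prime.eq_two_of_prime_add_one {p : ℕ} (hp : p.Prime) (hp' : (p + 1).Prime) :
    p = 2 := by
  rcases hp.eq_two_or_odd' with h | hodd
  · exact h
  · have := (hp'.even_iff).1 hodd.add_one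
    have := hp.two_le
    omega

theorem two_p_in_image_iff (p : ℕ) (hp : p.Prime) :
    (∃ n : ℕ, 0 < n ∧ Nat.totient n = 2 * p) ↔ Nat.Prime (2 * p + 1) := by
  refine ⟨fun ⟨n, _, hn⟩ => ?_, fun h => ⟨2 * p + 1, by omega, by rw [totient_prime h]; omega⟩⟩
  have hsmall_or_prime : p ≤ 3 ∨ (2 * p + 1).Prime := by
    rcases hp.sq_dvd_or_exists_prime_dvd_sub_one_of_dvd_totient (hn ▸ dvd_mul_left p 2)
      with hsq | ⟨q, hq, hqn, hpq⟩
    · have hdvd : p * (p - 1) ∣ p * 2 := by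
        simpa [totient_prime_pow hp two_pos, hn, mul_comm 2] using totient_dvd_of_dvd hsq
      have hp_sub : p - 1 ≤ 2 := Nat.le_of_dvd two_pos (Nat.dvd_of_mul_dvd_mul_left hp.pos hdvd)
      exact .inl (by omega)
    · have hq_dvd : q - 1 ∣ 2 * p := hn ▸ totient_prime hq ▸ totient_dvd_of_dvd hqn
      have hq_pos := hq.one_lt
      rcases eq_or_eq_two_mul_of_dvd_of_dvd_two_mul hp.pos hpq hq_dvd with hq1 | hq1
      · have hp2 := hp.eq_two_of_prime_add_one (by rwa [show p + 1 = q by omega])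
        exact .inl (by omega)
      · exact .inr (by rwa [show 2 * p + 1 = q by omega])
  rcases hsmall_or_prime with hle | hprime
  · have := hp.two_le
    interval_cases p <;> norm_num
  · exact hprime
end

section
/- For every odd prime p, the set of primes q such that p divides 2q+1 and 2q does not lie in the image of φ is infinite. -/
/-!
If `φ n = 2q` with `q > 3` prime, then `q ∣ φ n = ∏ r ^ (k - 1) * (r - 1)`, so either `q ∣ n`, and then
`q - 1 = φ q ∣ 2q` is impossible, or `q ∣ r - 1 ∣ 2q` for a prime `r ∣ n`, which forces
`r = 2q + 1`. Hence `2q` is not a totient as soon as `2q + 1` is composite. By Dirichlet's theorem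
there are infinitely many primes `q ≡ (p - 1) / 2 (mod p)`; for these `p ∣ 2q + 1`, and once
`q > p` the number `2q + 1` is composite.
-/

open Nat Filter

theorem Nat.Prime.dvd_or_exists_dvd_sub_one_of_dvd_totient {q n : ℕ} (hq : q.Prime)
    (h : q ∣ φ n) : q ∣ n ∨ ∃ r, r.Prime ∧ r ∣ n ∧ q ∣ r - 1 := by
  rcases eq_or_ne n 0 with rfl | hn
  · simp
  rw [totient_eq_prod_factorization hn, hq.prime.dvd_finsuppProd_iff] at h
  obtain ⟨r, hr, hqr⟩ := h
  have hr_prime : r.Prime := prime_of_mem_primeFactors hr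
  have hrn : r ∣ n := dvd_of_mem_primeFactors hr
  rcases hq.dvd_mul.mp hqr with hq_pow | hq_sub
  · left
    rwa [(prime_dvd_prime_iff_eq hq hr_prime).mp (hq.dvd_of_dvd_pow hq_pow)]
  · exact Or.inr ⟨r, hr_prime, hrn, hq_sub⟩

theorem Nat.Prime.prime_two_mul_add_one_of_totient_eq {q n : ℕ} (hq : q.Prime) (hq3 : 3 < q)
    (h : φ n = 2 * q) : (2 * q + 1).Prime := by
  rcases hq.dvd_or_exists_dvd_sub_one_of_dvd_totient (h ▸ dvd_mul_left q 2)
    with hqn | ⟨r, hr, hrn, c, hc⟩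
  · have hdvd : q - 1 ∣ 2 * q := h ▸ totient_prime hq ▸ totient_dvd_of_dvd hqn
    rw [show 2 * q = 2 * (q - 1) + 2 by omega, Nat.dvd_add_right (dvd_mul_left _ _)] at hdvd
    have := Nat.le_of_dvd two_pos hdvd
    omega
  · have hqc : q * c ∣ q * 2 := by
      rw [← hc, mul_comm q 2, ← h, ← totient_prime hr]
      exact totient_dvd_of_dvd hrn
    rcases (Nat.dvd_prime prime_two).mp (Nat.dvd_of_mul_dvd_mul_left hq.pos hqc) with rfl | rfl
    · have hr_even : 2 ∣ r := by
        rw [show r = q + 1 by have := hr.pos; omega]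
        exact (hq.odd_of_ne_two (by omega)).add_one.two_dvd
      have := hr.eq_one_or_self_of_dvd 2 hr_even
      omega
    · rwa [show r = 2 * q + 1 by have := hr.pos; omega] at hr

theorem infinite_primes_not_in_image (p : ℕ) (hp : p.Prime) (hodd : Odd p) :
    {q : ℕ | q.Prime ∧ p ∣ 2 * q + 1 ∧ ¬∃ n : ℕ, 0 < n ∧ Nat.totient n = 2 * q}.Infinite := by
  have hp3 : 3 ≤ p := hp.odd_iff.mp hodd
  obtain ⟨a, ha⟩ : ∃ a, 2 * a + 1 = p := hodd.exists_bit1.imp fun _ h => h.symm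
  have hap : a.Coprime p := (coprime_of_lt_prime (by omega) (by omega) hp).symm
  refine frequently_atTop_iff_infinite.mp
    (((frequently_atTop_prime_and_modEq hp.ne_zero hap).and_eventually
      (eventually_gt_atTop p)).mono ?_)
  rintro q ⟨⟨hq, hqa⟩, hpq⟩
  have hdvd : p ∣ 2 * q + 1 := modEq_zero_iff_dvd.mp <|
    ((hqa.mul_left 2).add_right 1).trans (modEq_zero_iff_dvd.mpr (by rw [ha]))
  refine ⟨hq, hdvd, fun ⟨n, _, hn⟩ => ?_⟩
  have := (prime_dvd_prime_iff_eq hp (hq.prime_two_mul_add_one_of_totient_eq (by omega) hn)).mp hdvd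
  omega
end

section
/- If p is a prime with p ≥ 5 such that 2p+1 is also prime, then the set of positive integers n with φ(n) = 2p is exactly {2p+1, 4p+2}; in particular it contains exactly one odd element and one even element. -/
theorem preimage_two_p (p : ℕ) (hp : p.Prime) (hp5 : 5 ≤ p) (hq : Nat.Prime (2 * p + 1)) :
    {n : ℕ | 0 < n ∧ Nat.totient n = 2 * p} = {2 * p + 1, 4 * p + 2} := by
  ext n
  simp only [Set.mem_setOf_eq, Set.mem_insert_iff, Set.mem_singleton_iff]
  constructor
  · rintro ⟨hn, hφ⟩
    -- first show q = 2p+1 divides n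
    have hqn : (2 * p + 1) ∣ n := by
      by_contra hqn
      have hpd : p ∣ n.totient := hφ ▸ ⟨2, by ring⟩
      rw [Nat.totient_eq_prod_factorization hn.ne'] at hpd
      rw [Finsupp.prod] at hpd
      obtain ⟨r, hrs, hrd⟩ := (hp.prime.dvd_finset_prod_iff _).mp hpd
      have hrsup := Nat.support_factorization (n := n) ▸ hrs
      have hrp : r.Prime := Nat.prime_of_mem_primeFactors hrsup
      have hrn : r ∣ n := Nat.dvd_of_mem_primeFactors hrsup
      rcases hp.prime.dvd_mul.mp hrd with h1 | h2
      · -- p ∣ r ^ (k-1), so r = p and p^2 ∣ n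
        have hpr : p = r := by
          rcases Nat.Prime.dvd_of_dvd_pow hp h1 with h
          exact (Nat.prime_dvd_prime_iff_eq hp hrp).mp h
        subst hpr
        have hk : 2 ≤ n.factorization p := by
          rcases Nat.lt_or_ge (n.factorization p) 2 with h | h
          · exfalso
            have h0 : n.factorization p - 1 = 0 := by omega
            rw [h0, pow_zero] at h1
            exact Nat.Prime.one_lt hp |>.ne' (Nat.dvd_one.mp h1)
          · exact h
        have h2d : p ^ 2 ∣ n := (Nat.Prime.pow_dvd_iff_le_factorization hp hn.ne').mpr hk
        have := Nat.totient_dvd_of_dvd h2d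
        rw [hφ, Nat.totient_prime_pow hp (by norm_num)] at this
        -- p^1 * (p-1) ∣ 2p
        have hple : p ^ 1 * (p - 1) ≤ 2 * p := Nat.le_of_dvd (by omega) this
        simp [pow_one] at hple
        have h4 : 4 ≤ p - 1 := by omega
        have := Nat.mul_le_mul_left p h4
        linarith
      · -- p ∣ r - 1
        have hr1 : (r - 1) ∣ 2 * p := by
          have := Nat.totient_dvd_of_dvd hrn
          rwa [hφ, Nat.totient_prime hrp] at this
        obtain ⟨t, ht⟩ := h2
        have ht2 : t ∣ 2 := by
          have hcd : p * t ∣ p * 2 := by rw [← ht, mul_comm p 2]; exact hr1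
          exact (mul_dvd_mul_iff_left (by omega : p ≠ 0)).mp hcd
        have hr2 : 2 ≤ r := hrp.two_le
        have ht1 : 1 ≤ t := by
          rcases Nat.eq_zero_or_pos t with rfl | h
          · simp at ht; omega
          · exact h
        have ht2' : t ≤ 2 := Nat.le_of_dvd two_pos ht2
        interval_cases t
        · -- r - 1 = p, r = p + 1 even prime > 2
          have hre : r = p + 1 := by omega
          have : r % 2 = 0 := by
            have hpodd := hp.odd_of_ne_two (by omega)
            rcases hpodd with ⟨k, hk⟩
            omega
          have := (Nat.Prime.even_iff hrp).mp (Nat.even_iff.mpr this)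
          omega
        · -- r = 2p + 1 divides n, contradiction
          have : r = 2 * p + 1 := by omega
          exact hqn (this ▸ hrn)
    -- now n = (2p+1) * m with φ m = 1
    obtain ⟨m, hm⟩ := hqn
    have hm0 : 0 < m := by rcases Nat.eq_zero_or_pos m with h | h; · simp [h] at hm; omega
                           · exact h
    have hqm : ¬ (2 * p + 1) ∣ m := by
      intro hd
      have h2 : (2 * p + 1) ^ 2 ∣ n := by
        obtain ⟨s, hs⟩ := hd
        exact ⟨s, by rw [hm, hs]; ring⟩
      have := Nat.totient_dvd_of_dvd h2
      rw [hφ, Nat.totient_prime_pow hq (by norm_num)] at this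
      have := Nat.le_of_dvd (by omega) this
      simp [pow_one] at this
      nlinarith
    have hcop : Nat.Coprime (2 * p + 1) m := (Nat.Prime.coprime_iff_not_dvd hq).mpr hqm
    have hφm : m.totient = 1 := by
      have : n.totient = (2 * p + 1).totient * m.totient := by
        rw [hm, Nat.totient_mul hcop]
      rw [hφ, Nat.totient_prime hq] at this
      have heq : 2 * p + 1 - 1 = 2 * p := by omega
      rw [heq] at this
      have h2p : 0 < 2 * p := by omega
      exact (Nat.eq_of_mul_eq_mul_left h2p (by rw [mul_one, ← this])).symm
    rcases Nat.totient_eq_one_iff.mp hφm with rfl | rfl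
    · left; omega
    · right; omega
  · rintro (rfl | rfl)
    · exact ⟨by omega, Nat.totient_prime hq⟩
    · refine ⟨by omega, ?_⟩
      have h42 : 4 * p + 2 = 2 * (2 * p + 1) := by ring
      have hcop : Nat.Coprime 2 (2 * p + 1) := by
        simp [Nat.coprime_two_left, Nat.odd_iff]
      rw [h42, Nat.totient_mul hcop, Nat.totient_two, Nat.totient_prime hq, one_mul]
      omega
end

section
/- If s is an odd integer with s ≥ 3, then the number of odd positive integers n with φ(n) = 2s equals the number of even positive integers n with φ(n) = 2s (both sets are finite). -/
theorem odd_card_eq_even_card (s : ℕ) (hodd : Odd s) (hs : 3 ≤ s) :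
    {n : ℕ | 0 < n ∧ Odd n ∧ Nat.totient n = 2 * s}.ncard =
      {n : ℕ | 0 < n ∧ Even n ∧ Nat.totient n = 2 * s}.ncard := by
  have hset : {n : ℕ | 0 < n ∧ Even n ∧ Nat.totient n = 2 * s} =
      (fun m => 2 * m) '' {n : ℕ | 0 < n ∧ Odd n ∧ Nat.totient n = 2 * s} := by
    ext n
    simp only [Set.mem_setOf_eq, Set.mem_image]
    constructor
    · rintro ⟨hn, hev, htot⟩
      obtain ⟨m, rfl⟩ : ∃ m, n = 2 * m := ⟨n / 2, (Nat.two_mul_div_two_of_even hev).symm⟩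
      have hm : 0 < m := by omega
      refine ⟨m, ⟨hm, ?_, ?_⟩, rfl⟩
      all_goals {
        rcases Nat.even_or_odd m with hme | hmo
        · -- m even leads to contradiction
          exfalso
          obtain ⟨k, rfl⟩ := hme
          have h2 : (2 : ℕ) ∣ k + k := ⟨k, by ring⟩
          have := Nat.totient_mul_of_prime_of_dvd Nat.prime_two h2
          rw [this] at htot
          have hk : Nat.totient (k + k) = s := by omega
          have hk3 : k + k < 3 := by
            by_contra h
            have := Nat.totient_even (by omega : 3 ≤ k + k)
            rw [hk] at this
            exact (Nat.not_even_iff_odd.mpr hodd) this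
          have hk1 : k < 2 := by omega
          interval_cases k <;> simp_all <;> omega
        · first
          | exact hmo
          | (rw [Nat.totient_mul (by simpa using hmo.coprime_two_left.symm),
                Nat.totient_two, one_mul] at htot; exact htot) }
    · rintro ⟨m, ⟨hm, hmo, htot⟩, rfl⟩
      refine ⟨by omega, ⟨m, by ring⟩, ?_⟩
      rw [Nat.totient_mul (by simpa using hmo.coprime_two_left.symm),
        Nat.totient_two, one_mul]
      exact htot
  rw [hset, Set.ncard_image_of_injective _ (fun a b h => by omega)]
end

section
/- There are infinitely many positive integers m such that the set φ⁻¹(m) = {n : φ(n) = m} is non-empty and contains exactly as many odd elements as even elements. -/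
/-!
If `m ≡ 2 (mod 4)` and `m > 2`, then no multiple of `4` has totient `m`, since `φ (2 * k) = 2 * φ k`
for even `k` and `φ k` is even once `k > 2`. So the even elements of `φ⁻¹(m)` are exactly the
`2 * n` with `n` odd in `φ⁻¹(m)`, because `φ (2 * n) = φ n` for odd `n`. The values
`m = φ (3 ^ (k + 2)) = 2 * 3 ^ (k + 1)` are infinitely many such `m` with nonempty preimage.
-/

open Nat

lemma four_dvd_totient_of_four_dvd {n : ℕ} (h4 : 4 ∣ n) (hφ : 2 < φ n) : 4 ∣ φ n := by
  obtain ⟨k, rfl⟩ := h4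
  have hk : φ (4 * k) = 2 * φ (2 * k) := by
    rw [show 4 * k = 2 * (2 * k) by ring, totient_two_mul_of_even (even_two_mul k)]
  have hk_gt : 2 < 2 * k := by
    by_contra! h
    have : k ≤ 1 := by omega
    interval_cases k
    · simp at hφ
    · simp [hk, totient_two] at hφ
  obtain ⟨j, hj⟩ := (totient_even hk_gt).two_dvd
  exact ⟨j, by rw [hk, hj]; ring⟩

lemma setOf_even_totient_eq_image {m : ℕ} (hm4 : m % 4 = 2) (hm2 : 2 < m) :
    {n : ℕ | 0 < n ∧ Even n ∧ φ n = m} = (2 * ·) '' {n : ℕ | 0 < n ∧ Odd n ∧ φ n = m} := by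
  ext n
  constructor
  · rintro ⟨hn, ⟨k, rfl⟩, hφ⟩
    have hk : Odd k := by
      by_contra hk
      obtain ⟨j, rfl⟩ := not_odd_iff_even.mp hk
      have := four_dvd_totient_of_four_dvd (n := j + j + (j + j)) ⟨j, by ring⟩ (hφ ▸ hm2)
      omega
    rw [← two_mul, totient_two_mul_of_odd hk] at hφ
    exact ⟨k, ⟨by omega, hk, hφ⟩, two_mul k⟩
  · rintro ⟨k, ⟨hk, hodd, hφ⟩, rfl⟩
    exact ⟨Nat.mul_pos two_pos hk, even_two_mul k, by rw [totient_two_mul_of_odd hodd, hφ]⟩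

lemma ncard_setOf_odd_totient_eq_ncard_setOf_even {m : ℕ} (hm4 : m % 4 = 2) (hm2 : 2 < m) :
    {n : ℕ | 0 < n ∧ Odd n ∧ φ n = m}.ncard = {n : ℕ | 0 < n ∧ Even n ∧ φ n = m}.ncard := by
  rw [setOf_even_totient_eq_image hm4 hm2,
    Set.ncard_image_of_injective _ (mul_right_injective₀ two_ne_zero)]

theorem infinite_balanced_preimages :
    {m : ℕ | 0 < m ∧ {n : ℕ | 0 < n ∧ Nat.totient n = m}.Nonempty ∧
      {n : ℕ | 0 < n ∧ Odd n ∧ Nat.totient n = m}.ncard =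
        {n : ℕ | 0 < n ∧ Even n ∧ Nat.totient n = m}.ncard}.Infinite := by
  have hinj : Function.Injective fun k : ℕ => 2 * 3 ^ (k + 1) := fun a b h => by
    simpa using h
  refine (Set.infinite_range_of_injective hinj).mono ?_
  rintro _ ⟨k, rfl⟩
  have hφ : φ (3 ^ (k + 2)) = 2 * 3 ^ (k + 1) := by
    rw [totient_prime_pow_succ prime_three, mul_comm]
  have hm2 : 2 < 2 * 3 ^ (k + 1) := by
    have := Nat.one_le_pow k 3 (by norm_num)
    rw [pow_succ]
    omega
  have hm4 : 2 * 3 ^ (k + 1) % 4 = 2 := by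
    obtain ⟨j, hj⟩ : Odd (3 ^ (k + 1)) := Odd.pow (by decide)
    rw [hj]
    omega
  exact ⟨zero_lt_two.trans hm2, ⟨_, by positivity, hφ⟩,
    ncard_setOf_odd_totient_eq_ncard_setOf_even hm4 hm2⟩
end

section
/- For every natural number k, there is at most one odd positive integer n with φ(n) = 2^k. -/
/-!
If `p ^ 2 ∣ n` then `p ∣ φ n`, so an odd `n` with `φ n = 2 ^ k` is squarefree, and every prime
factor `p` has `p - 1 ∣ 2 ^ k`, which makes `p` a Fermat prime `2 ^ 2 ^ m + 1`. Then
`φ n = ∏ (p - 1) = 2 ^ (∑ 2 ^ m)`, so the exponents `m` are the binary digits of `k`, and `n`,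
the product of its prime factors, is determined by `k`.
-/

open Finset

namespace Nat

open scoped Nat

theorem totient_eq_prod_primeFactors_sub_one {n : ℕ} (hn : Squarefree n) :
    φ n = ∏ p ∈ n.primeFactors, (p - 1) := by
  rw [totient_eq_div_primeFactors_mul, prod_primeFactors_of_squarefree hn,
    Nat.div_self (pos_of_ne_zero hn.ne_zero), one_mul]

theorem Prime.dvd_totient_of_sq_dvd {p n : ℕ} (hp : p.Prime) (h : p ^ 2 ∣ n) : p ∣ φ n :=
  calc p ∣ φ (p ^ 2) := by
        rw [totient_prime_pow_succ hp, pow_one]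
        exact dvd_mul_right p (p - 1)
    _ ∣ φ n := totient_dvd_of_dvd h

theorem squarefree_of_odd_of_totient_eq_two_pow {n k : ℕ} (hn : Odd n) (h : φ n = 2 ^ k) :
    Squarefree n := by
  refine squarefree_iff_prime_squarefree.mpr fun p hp hpp => ?_
  have hp2 : p = 2 :=
    (prime_dvd_prime_iff_eq hp prime_two).mp
      (hp.dvd_of_dvd_pow (h ▸ hp.dvd_totient_of_sq_dvd (by rwa [sq])))
  subst hp2
  exact hn.not_two_dvd_nat (dvd_trans (dvd_mul_right 2 2) hpp)

theorem Prime.exists_fermatNumber_eq_of_sub_one_dvd_two_pow {p k : ℕ} (hp : p.Prime)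
    (hp2 : p ≠ 2) (h : p - 1 ∣ 2 ^ k) : ∃ m, fermatNumber m = p := by
  obtain ⟨a, -, ha⟩ := (dvd_prime_pow prime_two).mp h
  have hp3 : 3 ≤ p := by have := hp.two_le; omega
  have hpa : 2 ^ a + 1 = p := by omega
  have ha0 : a ≠ 0 := by rintro rfl; omega
  obtain ⟨m, rfl⟩ := pow_of_pow_add_prime one_lt_two ha0 (hpa ▸ hp)
  exact ⟨m, hpa⟩

theorem exists_fermatNumber_eq_of_mem_primeFactors {n k p : ℕ} (hn : Odd n) (h : φ n = 2 ^ k)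
    (hp : p ∈ n.primeFactors) : ∃ m, fermatNumber m = p := by
  have hpn := dvd_of_mem_primeFactors hp
  have hp2 : p ≠ 2 := by
    rintro rfl
    exact hn.not_two_dvd_nat hpn
  have hp' := prime_of_mem_primeFactors hp
  exact hp'.exists_fermatNumber_eq_of_sub_one_dvd_two_pow hp2
    (h ▸ totient_prime hp' ▸ totient_dvd_of_dvd hpn)

theorem eq_prod_fermatNumber_bitIndices_of_odd_of_totient_eq_two_pow {n k : ℕ} (hn : Odd n)
    (h : φ n = 2 ^ k) : n = ∏ m ∈ k.bitIndices.toFinset, fermatNumber m := by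
  have hsq := squarefree_of_odd_of_totient_eq_two_pow hn h
  obtain ⟨S, -, hS⟩ : ∃ S : Finset ℕ, (S : Set ℕ) ⊆ Set.univ ∧
      S.image fermatNumber = n.primeFactors :=
    subset_set_image_iff.mp fun p hp =>
      (exists_fermatNumber_eq_of_mem_primeFactors hn h hp).imp fun _ hm => ⟨trivial, hm⟩
  have hk : ∑ m ∈ S, 2 ^ m = k := by
    apply Nat.pow_right_injective le_rfl
    simp only [← h, totient_eq_prod_primeFactors_sub_one hsq, ← hS,
      prod_image fermatNumber_injective.injOn, ← prod_pow_eq_pow_sum, fermatNumber,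
      add_tsub_cancel_right]
  rw [← prod_primeFactors_of_squarefree hsq, ← hS, prod_image fermatNumber_injective.injOn,
    ← hk, toFinset_bitIndices_sum_two_pow]

end Nat

theorem at_most_one_odd_totient_pow_two (k : ℕ) :
    ∀ n₁ n₂ : ℕ, 0 < n₁ → Odd n₁ → Nat.totient n₁ = 2 ^ k →
      0 < n₂ → Odd n₂ → Nat.totient n₂ = 2 ^ k → n₁ = n₂ := by
  intro n₁ n₂ _ h₁ t₁ _ h₂ t₂
  rw [Nat.eq_prod_fermatNumber_bitIndices_of_odd_of_totient_eq_two_pow h₁ t₁,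
    Nat.eq_prod_fermatNumber_bitIndices_of_odd_of_totient_eq_two_pow h₂ t₂]
end

section
/- There is no odd positive integer n with φ(n) = 2^32. -/
theorem no_odd_totient_two_pow_32 :
    ¬∃ n : ℕ, 0 < n ∧ Odd n ∧ Nat.totient n = 2 ^ 32 := by
  rintro ⟨n, hn, hodd, htot⟩
  have hsq : Squarefree n := by
    rw [Nat.squarefree_iff_prime_squarefree]
    intro p hp hpp
    have h1 : Nat.totient (p ^ 2) ∣ 2 ^ 32 := htot ▸ Nat.totient_dvd_of_dvd (by rwa [pow_two])
    rw [Nat.totient_prime_pow hp (by norm_num)] at h1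
    have hpd : p ∣ 2 ^ 32 := dvd_trans ⟨p - 1, by ring_nf⟩ h1
    have := (Nat.prime_dvd_prime_iff_eq hp Nat.prime_two).mp (hp.dvd_of_dvd_pow hpd)
    subst this
    exact (Nat.not_even_iff_odd.mpr hodd)
      (even_iff_two_dvd.mpr (dvd_trans (dvd_pow_self 2 two_ne_zero) hpp))
  have hmem : n.primeFactors ⊆ ({3, 5, 17, 257, 65537} : Finset ℕ) := by
    intro p hp
    have hpp := Nat.prime_of_mem_primeFactors hp
    have hdvd : p ∣ n := Nat.dvd_of_mem_primeFactors hp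
    have h1 : p - 1 ∣ 2 ^ 32 := by
      have := Nat.totient_dvd_of_dvd hdvd
      rwa [Nat.totient_prime hpp, htot] at this
    obtain ⟨k, hk, hke⟩ := (Nat.dvd_prime_pow Nat.prime_two).mp h1
    have hp2 : 2 ≤ p := hpp.two_le
    have hpe : p = 2 ^ k + 1 := by omega
    subst hpe
    interval_cases k
    any_goals norm_num at hpp
    any_goals decide
    exfalso
    norm_num at hdvd
    exact Nat.not_odd_iff_even.mpr (even_iff_two_dvd.mpr hdvd)  hodd
  have hdvd : n ∣ 3 * 5 * 17 * 257 * 65537 := by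
    calc n = ∏ p ∈ n.primeFactors, p := (Nat.prod_primeFactors_of_squarefree hsq).symm
    _ ∣ ∏ p ∈ ({3, 5, 17, 257, 65537} : Finset ℕ), p :=
        Finset.prod_dvd_prod_of_subset _ _ _ hmem
    _ = 3 * 5 * 17 * 257 * 65537 := by decide
  have h2 : (2:ℕ) ^ 32 ∣ Nat.totient (3 * 5 * 17 * 257 * 65537) :=
    htot ▸ Nat.totient_dvd_of_dvd hdvd
  have e : Nat.totient (3 * 5 * 17 * 257 * 65537) = 2 ^ 31 := by
    rw [Nat.totient_mul (by norm_num [Nat.Coprime]),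
        Nat.totient_mul (by norm_num [Nat.Coprime]),
        Nat.totient_mul (by norm_num [Nat.Coprime]),
        Nat.totient_mul (by norm_num [Nat.Coprime]),
        Nat.totient_prime (by norm_num), Nat.totient_prime (by norm_num),
        Nat.totient_prime (by norm_num), Nat.totient_prime (by norm_num),
        Nat.totient_prime (by norm_num)]
    norm_num
  rw [e] at h2
  norm_num at h2
end
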